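/- If R is an n-ary hyperintegral domain and S = R \ {0}, then every nonzero element of S⁻¹R is invertible. -/

import Mathlib

universe u v

/-- Extension of a set-valued `m`-ary hyperoperation to sets of arguments. -/
def setExt {α : Type u} (f : (ℕ → α) → Set α) (A : ℕ → Set α) : Set α :=
  {r | ∃ x : ℕ → α, (∀ i, x i ∈ A i) ∧ r ∈ f x}

/-- A commutative Krasner `(m,n)`-hyperring with scalar identity `one` and
absorbing element `zero`.  The `m`-ary hyperoperation `f` and the `n`-ary
operation `g` are encoded as functions on `ℕ`-indexed families which only
depend on the first `m` (resp. `n`) entries. -/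
structure KrasnerHyperring (R : Type u) (m n : ℕ) where
  f : (ℕ → R) → Set R
  g : (ℕ → R) → R
  zero : R
  one : R
  neg : R → R
  hm : 2 ≤ m
  hn : 2 ≤ n
  f_congr : ∀ x y : ℕ → R, (∀ i, i < m → x i = y i) → f x = f y
  g_congr : ∀ x y : ℕ → R, (∀ i, i < n → x i = y i) → g x = g y
  f_comm : ∀ (x : ℕ → R) (σ : Equiv.Perm ℕ), (∀ i, m ≤ i → σ i = i) → f (x ∘ σ) = f x
  g_comm : ∀ (x : ℕ → R) (σ : Equiv.Perm ℕ), (∀ i, n ≤ i → σ i = i) → g (x ∘ σ) = g x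
  f_nonempty : ∀ x, (f x).Nonempty
  f_assoc : ∀ (z : ℕ → R) (i j : ℕ), i < m → j < m →
    setExt f (fun k => if k < i then {z k} else if k = i then f (fun l => z (i + l)) else {z (k + m - 1)}) =
    setExt f (fun k => if k < j then {z k} else if k = j then f (fun l => z (j + l)) else {z (k + m - 1)})
  g_assoc : ∀ (z : ℕ → R) (i j : ℕ), i < n → j < n →
    g (fun k => if k < i then z k else if k = i then g (fun l => z (i + l)) else z (k + n - 1)) =
    g (fun k => if k < j then z k else if k = j then g (fun l => z (j + l)) else z (k + n - 1))
  distrib : ∀ (x a : ℕ → R),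
    {r | ∃ u ∈ f x, r = g (fun j => if j = 0 then u else a j)} =
    f (fun k => g (fun j => if j = 0 then x k else a j))
  f_zero : ∀ x : R, f (fun i => if i = 0 then x else zero) = {x}
  g_one : ∀ x : R, g (fun i => if i = 0 then x else one) = x
  g_zero : ∀ (x : ℕ → R) (i : ℕ), i < n → x i = zero → g x = zero
  neg_mem : ∀ x : R, zero ∈ f (fun i => if i = 0 then x else if i = 1 then neg x else zero)
  neg_unique : ∀ x y : R, zero ∈ f (fun i => if i = 0 then x else if i = 1 then y else zero) → y = neg x
  canonical : ∀ (a : R) (y : ℕ → R), a ∈ f y → ∀ i, i < m →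
    y i ∈ f (fun j => if j = i then a else neg (y j))

namespace KrasnerHyperring

variable {R : Type u} {m n : ℕ}

/-- `g(a, b, 1^(n-2))`. -/
def g2 (H : KrasnerHyperring R m n) (a b : R) : R :=
  H.g (fun i => if i = 0 then a else if i = 1 then b else H.one)

/-- `S` is an `n`-ary multiplicative subset. -/
def IsMultSubset (H : KrasnerHyperring R m n) (S : Set R) : Prop :=
  ∀ s : ℕ → R, (∀ i, i < n → s i ∈ S) → H.g s ∈ S

/-- The set `f(g(r,s',1^(n-2)), -g(r',s,1^(n-2)), 0^(m-2))`. -/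
def fracMix (H : KrasnerHyperring R m n) (r s' r' s : R) : Set R :=
  H.f (fun i => if i = 0 then H.g2 r s' else if i = 1 then H.neg (H.g2 r' s) else H.zero)

/-- The fraction relation on `R × S`:
`(r,s) ∼ (r',s')` iff `0 ∈ g(t, f(g(r,s',1^(n-2)), -g(r',s,1^(n-2)), 0^(m-2)), 1^(n-2))`
for some `t ∈ S`. -/
def FracRel (H : KrasnerHyperring R m n) (S : Set R) (p q : R × S) : Prop :=
  ∃ t ∈ S, ∃ u ∈ H.fracMix p.1 (q.2 : R) q.1 (p.2 : R), H.g2 t u = H.zero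

/-- The hyperring of fractions `S⁻¹R` as a quotient of `R × S`. -/
def Frac (H : KrasnerHyperring R m n) (S : Set R) : Type u :=
  Quot (H.FracRel S)

/-- The fraction `r/s`. -/
def mkFrac (H : KrasnerHyperring R m n) (S : Set R) (r s : R) (hs : s ∈ S) : Frac H S :=
  Quot.mk _ (r, ⟨s, hs⟩)

/-- The zero fraction `0/1`. -/
def zeroFrac (H : KrasnerHyperring R m n) {S : Set R} (h1 : H.one ∈ S) : Frac H S :=
  H.mkFrac S H.zero H.one h1

/-- The unit fraction `1/1`. -/
def oneFrac (H : KrasnerHyperring R m n) {S : Set R} (h1 : H.one ∈ S) : Frac H S :=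
  H.mkFrac S H.one H.one h1

/-- The natural map `φ : R → S⁻¹R`, `r ↦ r/1`. -/
def natMap (H : KrasnerHyperring R m n) {S : Set R} (h1 : H.one ∈ S) (r : R) : Frac H S :=
  H.mkFrac S r H.one h1

/-- The `n`-ary multiplication on `S⁻¹R`:
`G(r_1/s_1, ..., r_n/s_n) = g(r_1,...,r_n)/g(s_1,...,s_n)`. -/
noncomputable def fracG (H : KrasnerHyperring R m n) {S : Set R} (hS : H.IsMultSubset S)
    (x : ℕ → Frac H S) : Frac H S :=
  H.mkFrac S (H.g (fun i => ((x i).out).1)) (H.g (fun i => (((x i).out).2 : R)))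
    (hS _ (fun i _ => ((x i).out).2.property))

/-- The denominator `g(s_1,...,s_m,1^(n-m))` of the `m`-ary hypersum. -/
noncomputable def denomF (H : KrasnerHyperring R m n) {S : Set R} (x : ℕ → Frac H S) : R :=
  H.g (fun j => if j < m then (((x j).out).2 : R) else H.one)

theorem denomF_mem (H : KrasnerHyperring R m n) {S : Set R} (hS : H.IsMultSubset S)
    (h1 : H.one ∈ S) (x : ℕ → Frac H S) : H.denomF x ∈ S := by
  refine hS _ (fun j _ => ?_)
  by_cases h : j < m <;> simp only [h, if_true, if_false]
  · exact ((x j).out).2.property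
  · exact h1

/-- The `m`-ary hyperaddition on `S⁻¹R`:
`F(r_1/s_1,...,r_m/s_m) = f(g(r_1,s_2,...,s_m,1^(n-m)),...,g(s_1,...,s_{m-1},r_m,1^(n-m))) / g(s_1,...,s_m,1^(n-m))`. -/
noncomputable def fracF (H : KrasnerHyperring R m n) {S : Set R} (hS : H.IsMultSubset S)
    (h1 : H.one ∈ S) (x : ℕ → Frac H S) : Set (Frac H S) :=
  {q | ∃ u ∈ H.f (fun k => H.g (fun j =>
      if j = k then ((x k).out).1 else if j < m then (((x j).out).2 : R) else H.one)),
    q = H.mkFrac S u (H.denomF x) (H.denomF_mem hS h1 x)}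

/-- The negative of a fraction. -/
noncomputable def fracNeg (H : KrasnerHyperring R m n) {S : Set R} (q : Frac H S) : Frac H S :=
  H.mkFrac S (H.neg q.out.1) (q.out.2 : R) q.out.2.property

/-- Hyperideals of a Krasner `(m,n)`-hyperring. -/
def IsHyperideal (H : KrasnerHyperring R m n) (I : Set R) : Prop :=
  H.zero ∈ I ∧ (∀ x : ℕ → R, (∀ i, i < m → x i ∈ I) → H.f x ⊆ I) ∧
    (∀ a ∈ I, H.neg a ∈ I) ∧
    (∀ (x : ℕ → R) (i : ℕ), i < n → x i ∈ I → H.g x ∈ I)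

/-- The localization `S⁻¹I = {a/s : a ∈ I, s ∈ S}` of a hyperideal. -/
def locIdeal (H : KrasnerHyperring R m n) (S I : Set R) : Set (Frac H S) :=
  {q | ∃ a ∈ I, ∃ s, ∃ hs : s ∈ S, q = H.mkFrac S a s hs}

/-- `n`-ary prime hyperideals. -/
def IsPrimeHyperideal (H : KrasnerHyperring R m n) (P : Set R) : Prop :=
  H.IsHyperideal P ∧ P ≠ Set.univ ∧ ∀ x : ℕ → R, H.g x ∈ P → ∃ i, i < n ∧ x i ∈ P

/-- The radical of a hyperideal: the intersection of all `n`-ary prime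
hyperideals containing it (`R` if there are none). -/
def radical (H : KrasnerHyperring R m n) (I : Set R) : Set R :=
  ⋂₀ {P | H.IsPrimeHyperideal P ∧ I ⊆ P}

/-- `n`-ary primary hyperideals. -/
def IsPrimaryHyperideal (H : KrasnerHyperring R m n) (Q : Set R) : Prop :=
  H.IsHyperideal Q ∧ Q ≠ Set.univ ∧
    ∀ x : ℕ → R, H.g x ∈ Q → ∀ i, i < n → x i ∉ Q →
      H.g (Function.update x i H.one) ∈ H.radical Q

/-- `n`-ary hyperintegral domains. -/
def IsHyperDomain (H : KrasnerHyperring R m n) : Prop :=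
  ∀ x : ℕ → R, H.g x = H.zero → ∃ i, i < n ∧ x i = H.zero

/-- Hyperideals of the hyperring of fractions `S⁻¹R`. -/
def IsFracHyperideal (H : KrasnerHyperring R m n) {S : Set R} (hS : H.IsMultSubset S)
    (h1 : H.one ∈ S) (J : Set (Frac H S)) : Prop :=
  H.zeroFrac h1 ∈ J ∧ (∀ x : ℕ → Frac H S, (∀ i, i < m → x i ∈ J) → H.fracF hS h1 x ⊆ J) ∧
    (∀ q ∈ J, H.fracNeg q ∈ J) ∧
    (∀ (x : ℕ → Frac H S) (i : ℕ), i < n → x i ∈ J → H.fracG hS x ∈ J)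

/-- `n`-ary prime hyperideals of `S⁻¹R`. -/
def IsFracPrime (H : KrasnerHyperring R m n) {S : Set R} (hS : H.IsMultSubset S)
    (h1 : H.one ∈ S) (P : Set (Frac H S)) : Prop :=
  H.IsFracHyperideal hS h1 P ∧ P ≠ Set.univ ∧
    ∀ x : ℕ → Frac H S, H.fracG hS x ∈ P → ∃ i, i < n ∧ x i ∈ P

/-- Maximal hyperideals of `S⁻¹R`. -/
def IsFracMaximal (H : KrasnerHyperring R m n) {S : Set R} (hS : H.IsMultSubset S)
    (h1 : H.one ∈ S) (M : Set (Frac H S)) : Prop :=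
  H.IsFracHyperideal hS h1 M ∧ M ≠ Set.univ ∧
    ∀ J : Set (Frac H S), H.IsFracHyperideal hS h1 J → M ⊆ J → J = M ∨ J = Set.univ

/-- The radical of a hyperideal of `S⁻¹R`. -/
def fracRadical (H : KrasnerHyperring R m n) {S : Set R} (hS : H.IsMultSubset S)
    (h1 : H.one ∈ S) (J : Set (Frac H S)) : Set (Frac H S) :=
  ⋂₀ {P | H.IsFracPrime hS h1 P ∧ J ⊆ P}

/-- `n`-ary primary hyperideals of `S⁻¹R`. -/
def IsFracPrimary (H : KrasnerHyperring R m n) {S : Set R} (hS : H.IsMultSubset S)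
    (h1 : H.one ∈ S) (Q : Set (Frac H S)) : Prop :=
  H.IsFracHyperideal hS h1 Q ∧ Q ≠ Set.univ ∧
    ∀ x : ℕ → Frac H S, H.fracG hS x ∈ Q → ∀ i, i < n → x i ∉ Q →
      H.fracG hS (Function.update x i (H.oneFrac h1)) ∈ H.fracRadical hS h1 Q

/-- Homomorphisms of Krasner `(m,n)`-hyperrings. -/
def IsHom {R2 : Type v} (H : KrasnerHyperring R m n) (H2 : KrasnerHyperring R2 m n)
    (k : R → R2) : Prop :=
  (∀ x : ℕ → R, k '' (H.f x) = H2.f (k ∘ x)) ∧ (∀ x : ℕ → R, k (H.g x) = H2.g (k ∘ x))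

/-- Homomorphisms from `S⁻¹R` to a Krasner `(m,n)`-hyperring. -/
def IsFracHom {R2 : Type v} (H : KrasnerHyperring R m n) {S : Set R} (hS : H.IsMultSubset S)
    (h1 : H.one ∈ S) (H2 : KrasnerHyperring R2 m n) (h : Frac H S → R2) : Prop :=
  (∀ x : ℕ → Frac H S, h '' (H.fracF hS h1 x) = H2.f (h ∘ x)) ∧
    (∀ x : ℕ → Frac H S, h (H.fracG hS x) = H2.g (h ∘ x))

/-- The coset `f(r, I, 0^(m-2))` in the quotient `R/I`. -/
def quotCoset (H : KrasnerHyperring R m n) (I : Set R) (r : R) : Set R :=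
  setExt H.f (fun i => if i = 0 then {r} else if i = 1 then I else {H.zero})

end KrasnerHyperring

/-!
In a hyperintegral domain `g(t, u, 1, …, 1) = 0` with `t ≠ 0` forces `u = 0`, so the fraction
relation `r/s ∼ r'/s'` collapses to cross-multiplication `g(r, s', 1, …) = g(r', s, 1, …)`;
cancellation of nonzero factors (from distributivity and uniqueness of negatives) makes this an
equivalence, so equality in `S⁻¹R` is cross-multiplication. The inverse of a nonzero `r/s` is
`s/r`: by associativity the first two arguments of `g` only enter through `g(x, y, 1, …, 1)`,
and `g(r, s, 1, …) = g(s, r, 1, …)` makes the numerator and denominator of `G(r/s, s/r, 1/1, …)`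
agree.
-/

namespace KrasnerHyperring

variable {R : Type u} {m n : ℕ} (H : KrasnerHyperring R m n)

lemma g2_one_right (a : R) : H.g2 a H.one = a :=
  (H.g_congr _ _ fun i _ => by rcases i with _ | _ | i <;> rfl).trans (H.g_one a)

lemma g2_comm (a b : R) : H.g2 a b = H.g2 b a := by
  have hn := H.hn
  rw [g2, ← H.g_comm _ (Equiv.swap 0 1) fun i hi =>
    Equiv.swap_apply_of_ne_of_ne (by omega) (by omega)]
  refine H.g_congr _ _ fun i _ => ?_
  rcases i with _ | _ | i <;> simp [Equiv.swap_apply_def]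

lemma g2_one_left (a : R) : H.g2 H.one a = a := by
  rw [g2_comm, g2_one_right]

lemma g2_zero_left (b : R) : H.g2 H.zero b = H.zero :=
  H.g_zero _ 0 (by have := H.hn; omega) rfl

lemma g2_zero_right (a : R) : H.g2 a H.zero = H.zero :=
  H.g_zero _ 1 (by have := H.hn; omega) rfl

lemma g_eq_g2 (x : ℕ → R) {j : ℕ} (hj0 : j ≠ 0) (hjn : j < n)
    (hx : ∀ k, k < n → k ≠ 0 → k ≠ j → x k = H.one) : H.g x = H.g2 (x 0) (x j) := by
  have hn := H.hn
  rw [← H.g_comm x (Equiv.swap 1 j) fun i hi =>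
    Equiv.swap_apply_of_ne_of_ne (by omega) (by omega)]
  refine H.g_congr _ _ fun k hk => ?_
  rcases k with _ | _ | k
  · simp [Equiv.swap_apply_of_ne_of_ne, hj0.symm]
  · simp
  · have hk1 : k + 2 ≠ 1 := by omega
    by_cases hkj : k + 2 = j
    · simp [← hkj, hx 1 (by omega) one_ne_zero (by omega)]
    · simp [Equiv.swap_apply_of_ne_of_ne hk1 hkj, hx _ hk (by omega) hkj]

lemma g_g2_assoc (a b c : R) (d : ℕ → R) :
    H.g (fun k => if k = 0 then H.g2 a b else if k = 1 then c else d k) =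
      H.g (fun k => if k = 0 then a else if k = 1 then H.g2 b c else d k) := by
  have hn := H.hn
  -- `z = (a, b, 1, …, 1, c, d 2, d 3, …)` with `c` at position `n`: associating `z` at
  -- position 0 gives the left-hand side, at position 1 the right-hand side
  set z : ℕ → R := fun k => if k = 0 then a else if k = 1 then b else if k < n then H.one
    else if k = n then c else d (k + 1 - n) with hz
  have hab : H.g z = H.g2 a b :=
    H.g_eq_g2 z one_ne_zero (by omega) fun k hk h0 h1 => by simp [hz, h0, h1, hk]
  have hbc : H.g (fun l => z (1 + l)) = H.g2 b c := by
    rw [H.g_eq_g2 _ (j := n - 1) (by omega) (by omega) fun k hk h0 h1 => ?_]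
    · simp only [hz]; congr 1
      split_ifs <;> first | rfl | omega
    · simp only [hz]
      split_ifs <;> first | rfl | omega
  convert H.g_assoc z 0 1 (by omega) (by omega) using 1 <;>
    refine H.g_congr _ _ fun k hk => ?_
  · rcases k with _ | _ | k
    · simpa using hab.symm
    · simp only [hz]
      split_ifs <;> first | rfl | omega | contradiction
    · simp only [hz]
      split_ifs <;> first | rfl | omega | contradiction | (congr 1; omega)
  · rcases k with _ | _ | k
    · simp [hz]
    · simpa using hbc.symm
    · simp only [hz]
      split_ifs <;> first | rfl | omega | contradiction | (congr 1; omega)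

lemma g2_assoc (a b c : R) : H.g2 (H.g2 a b) c = H.g2 a (H.g2 b c) :=
  H.g_g2_assoc a b c fun _ => H.one

lemma g2_right_comm (a b c : R) : H.g2 (H.g2 a b) c = H.g2 (H.g2 a c) b := by
  rw [g2_assoc, g2_comm H b, ← g2_assoc]

lemma g_congr_g2 {a b a' b' : R} (h : H.g2 a b = H.g2 a' b') (d : ℕ → R) :
    H.g (fun k => if k = 0 then a else if k = 1 then b else d k) =
      H.g (fun k => if k = 0 then a' else if k = 1 then b' else d k) := by
  have merge : ∀ x y : R, H.g (fun k => if k = 0 then x else if k = 1 then y else d k) =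
      H.g (fun k => if k = 0 then H.g2 x y else if k = 1 then H.one else d k) := fun x y => by
    rw [g_g2_assoc, g2_one_right]
  rw [merge a, merge a', h]

def f2 (a b : R) : Set R :=
  H.f (fun i => if i = 0 then a else if i = 1 then b else H.zero)

lemma f2_comm (a b : R) : H.f2 a b = H.f2 b a := by
  have hm := H.hm
  rw [f2, ← H.f_comm _ (Equiv.swap 0 1) fun i hi =>
    Equiv.swap_apply_of_ne_of_ne (by omega) (by omega)]
  refine H.f_congr _ _ fun i _ => ?_
  rcases i with _ | _ | i <;> simp [Equiv.swap_apply_def]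

lemma neg_neg (a : R) : H.neg (H.neg a) = a := by
  have h : H.zero ∈ H.f2 (H.neg a) a := H.f2_comm a (H.neg a) ▸ H.neg_mem a
  exact (H.neg_unique _ _ h).symm

lemma neg_injective : Function.Injective H.neg := fun a b h => by
  rw [← H.neg_neg a, h, H.neg_neg]

lemma f2_g2_right (a b c : R) :
    H.f2 (H.g2 a c) (H.g2 b c) = (fun w => H.g2 w c) '' H.f2 a b := by
  have hd := H.distrib (fun i => if i = 0 then a else if i = 1 then b else H.zero)
    (fun j => if j = 1 then c else H.one)
  rw [f2, ← H.f_congr _ _ fun i _ => ?_, ← hd]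
  · ext r
    simp only [Set.mem_ofPred_eq, Set.mem_image, f2, g2, eq_comm (a := r)]
  · rcases i with _ | _ | i
    · rfl
    · rfl
    · exact H.g2_zero_left c

lemma neg_g2 (a b : R) : H.g2 (H.neg a) b = H.neg (H.g2 a b) := by
  have h : H.zero ∈ H.f2 (H.g2 a b) (H.g2 (H.neg a) b) :=
    H.f2_g2_right a (H.neg a) b ▸ ⟨H.zero, H.neg_mem a, H.g2_zero_left b⟩
  exact H.neg_unique _ _ h

variable {H}

lemma eq_zero_or_eq_zero_of_g2_eq_zero (hdom : H.IsHyperDomain) (hone : H.one ≠ H.zero)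
    {a b : R} (h : H.g2 a b = H.zero) : a = H.zero ∨ b = H.zero := by
  obtain ⟨i, -, hi⟩ := hdom _ h
  rcases i with _ | _ | i
  · exact Or.inl hi
  · exact Or.inr hi
  · exact absurd hi hone

lemma g2_right_cancel (hdom : H.IsHyperDomain) (hone : H.one ≠ H.zero) {a b c : R}
    (hc : c ≠ H.zero) (h : H.g2 a c = H.g2 b c) : a = b := by
  have hmem : H.zero ∈ H.f2 (H.g2 a c) (H.g2 (H.neg b) c) := by
    rw [neg_g2, ← h]
    exact H.neg_mem _
  obtain ⟨w, hw, hw0⟩ := H.f2_g2_right a (H.neg b) c ▸ hmem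
  obtain rfl : w = H.zero := (eq_zero_or_eq_zero_of_g2_eq_zero hdom hone hw0).resolve_right hc
  exact (H.neg_injective (H.neg_unique _ _ hw)).symm

section Frac

variable {S : Set R}

lemma fracRel_iff (hdom : H.IsHyperDomain) (h0 : H.zero ∉ S) (h1 : H.one ∈ S) {p q : R × S} :
    H.FracRel S p q ↔ H.g2 p.1 q.2 = H.g2 q.1 p.2 := by
  constructor
  · rintro ⟨t, ht, u, hu, htu⟩
    obtain rfl : u = H.zero := (eq_zero_or_eq_zero_of_g2_eq_zero hdom (ne_of_mem_of_not_mem h1 h0)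
      htu).resolve_left (ne_of_mem_of_not_mem ht h0)
    exact (H.neg_injective (H.neg_unique _ _ hu)).symm
  · intro h
    refine ⟨H.one, h1, H.zero, ?_, H.g2_zero_right H.one⟩
    rw [fracMix, h]
    exact H.neg_mem _

lemma fracRel_equivalence (hdom : H.IsHyperDomain) (h0 : H.zero ∉ S) (h1 : H.one ∈ S) :
    Equivalence (H.FracRel S) := by
  refine ⟨fun _ => (fracRel_iff hdom h0 h1).2 rfl,
    fun h => (fracRel_iff hdom h0 h1).2 ((fracRel_iff hdom h0 h1).1 h).symm,
    fun {a b c} hab hbc => (fracRel_iff hdom h0 h1).2 ?_⟩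
  rw [fracRel_iff hdom h0 h1] at hab hbc
  refine g2_right_cancel hdom (ne_of_mem_of_not_mem h1 h0) (ne_of_mem_of_not_mem b.2.2 h0) ?_
  calc H.g2 (H.g2 a.1 c.2) b.2 = H.g2 (H.g2 a.1 b.2) c.2 := H.g2_right_comm _ _ _
    _ = H.g2 (H.g2 b.1 a.2) c.2 := by rw [hab]
    _ = H.g2 (H.g2 b.1 c.2) a.2 := H.g2_right_comm _ _ _
    _ = H.g2 (H.g2 c.1 b.2) a.2 := by rw [hbc]
    _ = H.g2 (H.g2 c.1 a.2) b.2 := H.g2_right_comm _ _ _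

lemma mkFrac_eq_mkFrac_iff (hdom : H.IsHyperDomain) (h0 : H.zero ∉ S) (h1 : H.one ∈ S)
    {r s r' s' : R} (hs : s ∈ S) (hs' : s' ∈ S) :
    H.mkFrac S r s hs = H.mkFrac S r' s' hs' ↔ H.g2 r s' = H.g2 r' s :=
  Quot.eq.trans <| ((fracRel_equivalence hdom h0 h1).eqvGen_iff).trans (fracRel_iff hdom h0 h1)

lemma mkFrac_out (q : Frac H S) : H.mkFrac S q.out.1 q.out.2 q.out.2.2 = q :=
  Quot.out_eq q

lemma g2_out_eq_of_eq_mkFrac (hdom : H.IsHyperDomain) (h0 : H.zero ∉ S) (h1 : H.one ∈ S)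
    {q : Frac H S} {r s : R} {hs : s ∈ S} (hq : q = H.mkFrac S r s hs) :
    H.g2 q.out.1 s = H.g2 r q.out.2 :=
  (mkFrac_eq_mkFrac_iff hdom h0 h1 _ hs).1 (by rw [← hq]; exact mkFrac_out q)

lemma fracG_eq_oneFrac_iff (hdom : H.IsHyperDomain) (h0 : H.zero ∉ S) (h1 : H.one ∈ S)
    (hS : H.IsMultSubset S) (x : ℕ → Frac H S) :
    H.fracG hS x = H.oneFrac h1 ↔ H.g (fun i => (x i).out.1) = H.g (fun i => (x i).out.2) := by
  rw [fracG, oneFrac, mkFrac_eq_mkFrac_iff hdom h0 h1, g2_one_right, g2_one_left]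

end Frac

end KrasnerHyperring

/-- if `R` is an `n`-ary hyperintegral domain and `S = R \ {0}`,
then every nonzero element of `S⁻¹R` is invertible. -/
theorem frac_field {R : Type u} {m n : ℕ} (H : KrasnerHyperring R m n)
    (hdom : H.IsHyperDomain)
    (hS : H.IsMultSubset {x : R | x ≠ H.zero}) (h1 : H.one ∈ {x : R | x ≠ H.zero}) :
    ∀ q : KrasnerHyperring.Frac H {x : R | x ≠ H.zero}, q ≠ H.zeroFrac h1 →
      ∃ y : KrasnerHyperring.Frac H {x : R | x ≠ H.zero},
        H.fracG hS (fun i => if i = 0 then q else if i = 1 then y else H.oneFrac h1) =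
          H.oneFrac h1 := by
  open KrasnerHyperring in
  intro q hq
  have h0 : H.zero ∉ {x : R | x ≠ H.zero} := fun h => h rfl
  have hr : q.out.1 ≠ H.zero := fun hr0 => hq <| by
    rw [← mkFrac_out q, zeroFrac, mkFrac_eq_mkFrac_iff hdom h0 h1, hr0, g2_zero_left,
      g2_zero_left]
  let y := H.mkFrac {x : R | x ≠ H.zero} q.out.2 q.out.1 hr
  refine ⟨y, (fracG_eq_oneFrac_iff hdom h0 h1 hS _).2 ?_⟩
  have hy : H.g2 y.out.1 q.out.1 = H.g2 q.out.2 y.out.2 := g2_out_eq_of_eq_mkFrac hdom h0 h1 rfl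
  set c := (H.oneFrac h1).out
  have hc : c.1 = c.2 := by
    simpa [g2_one_right, g2_one_left] using
      g2_out_eq_of_eq_mkFrac hdom h0 h1 (q := H.oneFrac h1) rfl
  calc H.g (fun i => ((if i = 0 then q else if i = 1 then y else H.oneFrac h1).out.1))
      = H.g (fun k => if k = 0 then q.out.1 else if k = 1 then y.out.1 else c.1) :=
        H.g_congr _ _ fun k _ => by rcases k with _ | _ | k <;> simp [c]
    _ = H.g (fun k => if k = 0 then (q.out.2 : R) else if k = 1 then y.out.2 else c.1) :=
        H.g_congr_g2 (by rw [g2_comm, hy]) _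
    _ = H.g (fun i => ((if i = 0 then q else if i = 1 then y else H.oneFrac h1).out.2 : R)) :=
        H.g_congr _ _ fun k _ => by rcases k with _ | _ | k <;> simp [c, hc]
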